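/- Let α > β > 2, a, b > 0, f(r) = a r^{-α} - b r^{-β}, let L be a two-dimensional lattice of co-volume 1, and let V_L = (a α ζ_L(α) / (b β ζ_L(β)))^{2/(α-β)}. Then the minimal energy among dilates of L equals min_{V>0} E_f[√V·L] = E_f[√(V_L)·L] = (b^{α/(α-β)} ζ_L(β)^{α/(α-β)} / (a^{β/(α-β)} ζ_L(α)^{β/(α-β)})) · (β/α)^{β/(α-β)} · (β/α − 1), and this value is strictly negative. -/

import Mathlib

/-!
Dilating `L` by `c > 0` multiplies `ζ_L(s)` by `c^{-s}`, so with `t = c⁻¹`, `A = a ζ_L(α)` and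
`B = b ζ_L(β)` the energy of `c • L` is the profile `A t^α - B t^β`. On `t > 0` this profile is
minimal where `t^{α-β} = Bβ/(Aα)`, by the weighted AM-GM inequality
`r^β ≤ (β/α) r^α + (1 - β/α)`, and its minimum `B t^β (β/α - 1)` is negative. The Epstein sums
converge because the coordinate map `ℤ² → L` is bounded below by a multiple of the norm
(an injective linear map on `ℝ²` is anti-Lipschitz), which reduces them to `Σ_{x ∈ ℤ²} ‖x‖^{-s}`.
-/

open scoped Pointwise

noncomputable section

/-- A point of the Euclidean plane with coordinates `a`, `b`. -/
def vec2 (a b : ℝ) : EuclideanSpace ℝ (Fin 2) := (WithLp.equiv 2 (Fin 2 → ℝ)).symm ![a, b]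

/-- The lattice (as a set of points) generated by `u` and `v`. -/
def latticeSet (u v : EuclideanSpace ℝ (Fin 2)) : Set (EuclideanSpace ℝ (Fin 2)) :=
  {p | ∃ m n : ℤ, p = (m : ℝ) • u + (n : ℝ) • v}

/-- The determinant of the pair of plane vectors `(u, v)`. -/
def det2 (u v : EuclideanSpace ℝ (Fin 2)) : ℝ := u 0 * v 1 - u 1 * v 0

/-- `L` is a two-dimensional lattice, i.e. `L = ℤu ⊕ ℤv` for a basis `(u,v)` of ℝ². -/
def IsLattice2 (L : Set (EuclideanSpace ℝ (Fin 2))) : Prop :=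
  ∃ u v : EuclideanSpace ℝ (Fin 2), det2 u v ≠ 0 ∧ L = latticeSet u v

/-- `L` is a two-dimensional lattice of co-volume `V = |det(u,v)|`. -/
def IsLattice2OfCovol (L : Set (EuclideanSpace ℝ (Fin 2))) (V : ℝ) : Prop :=
  ∃ u v : EuclideanSpace ℝ (Fin 2), det2 u v ≠ 0 ∧ |det2 u v| = V ∧ L = latticeSet u v

/-- The Epstein zeta function of a set of points: `ζ_L(s) = Σ'_{p ∈ L, p ≠ 0} |p|^{-s}`. -/
def epsteinZeta (L : Set (EuclideanSpace ℝ (Fin 2))) (s : ℝ) : ℝ :=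
  ∑' p : ↥(L \ {0}), ‖(p : EuclideanSpace ℝ (Fin 2))‖ ^ (-s)

/-- The Lennard-Jones type energy `E_f[L] = Σ'_{p ∈ L, p ≠ 0} (a|p|^{-α} - b|p|^{-β})`. -/
def LJenergy (a b α β : ℝ) (L : Set (EuclideanSpace ℝ (Fin 2))) : ℝ :=
  ∑' p : ↥(L \ {0}),
    (a * ‖(p : EuclideanSpace ℝ (Fin 2))‖ ^ (-α) - b * ‖(p : EuclideanSpace ℝ (Fin 2))‖ ^ (-β))

/-- The triangular lattice `A₂ = √(2/√3)·[ℤ(1,0) ⊕ ℤ(1/2,√3/2)]`, of co-volume 1. -/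
def triangularLattice : Set (EuclideanSpace ℝ (Fin 2)) :=
  latticeSet (Real.sqrt (2 / Real.sqrt 3) • vec2 1 0)
    (Real.sqrt (2 / Real.sqrt 3) • vec2 (1 / 2) (Real.sqrt 3 / 2))

/-- The square lattice `ℤ² = ℤ(1,0) ⊕ ℤ(0,1)`. -/
def squareLattice : Set (EuclideanSpace ℝ (Fin 2)) := latticeSet (vec2 1 0) (vec2 0 1)

/-- `L` is the image of `L'` under an orthogonal transformation of ℝ². -/
def IsRotationOf (L L' : Set (EuclideanSpace ℝ (Fin 2))) : Prop :=
  ∃ O : EuclideanSpace ℝ (Fin 2) ≃ₗᵢ[ℝ] EuclideanSpace ℝ (Fin 2), L = O '' L'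

/-- The unit co-volume lattice parametrized by `(x, y)` in the half-fundamental domain:
`ℤu ⊕ ℤv` with `u = (1/√y, 0)` and `v = (x/√y, √y)`. -/
def latticeXY (x y : ℝ) : Set (EuclideanSpace ℝ (Fin 2)) :=
  latticeSet (vec2 (1 / Real.sqrt y) 0) (vec2 (x / Real.sqrt y) (Real.sqrt y))

/-- The Riemann zeta function `ζ(s) = Σ_{m ≥ 1} m^{-s}` (real variable version). -/
def riemannZetaReal (s : ℝ) : ℝ := ∑' n : ℕ+, (n : ℝ) ^ (-s)

end

local notation "ℝ²" => EuclideanSpace ℝ (Fin 2)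

theorem linearIndependent_of_det2_ne_zero {u v : ℝ²} (h : det2 u v ≠ 0) :
    LinearIndependent ℝ ![u, v] := by
  refine LinearIndependent.pair_iff.mpr fun s t hst => ?_
  have h0 : s * u 0 + t * v 0 = 0 := by simpa using congrArg (· 0) hst
  have h1 : s * u 1 + t * v 1 = 0 := by simpa using congrArg (· 1) hst
  have hs : s * det2 u v = 0 := by unfold det2; linear_combination v 1 * h0 - v 0 * h1
  have ht : t * det2 u v = 0 := by unfold det2; linear_combination u 0 * h1 - u 1 * h0
  exact ⟨(mul_eq_zero.mp hs).resolve_right h, (mul_eq_zero.mp ht).resolve_right h⟩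

theorem summable_norm_comp_intCast_rpow_neg {E : Type*} [NormedAddCommGroup E] [NormedSpace ℝ E]
    {f : (Fin 2 → ℝ) →ₗ[ℝ] E} (hf : Function.Injective f) {s : ℝ} (hs : 2 < s) :
    Summable fun x : Fin 2 → ℤ => ‖f (Int.cast ∘ x)‖ ^ (-s) := by
  obtain ⟨K, hK, hfK⟩ := f.exists_antilipschitzWith (LinearMap.ker_eq_bot.mpr hf)
  replace hK : (0 : ℝ) < K := hK
  refine .of_nonneg_of_le (fun _ => by positivity) (fun x => ?_)
    ((EisensteinSeries.summable_one_div_norm_rpow hs).mul_left ((K : ℝ) ^ s))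
  rcases eq_or_ne x 0 with rfl | hx
  · simp [Real.zero_rpow (by linarith : -s ≠ 0)]
  have hx : 0 < ‖x‖ := norm_pos_iff.mpr hx
  -- the sup norms of `x` and of its real cast agree definitionally
  have hxf : ‖x‖ ≤ K * ‖f (Int.cast ∘ x)‖ := hfK.le_mul_norm (map_zero f) (Int.cast ∘ x)
  calc ‖f (Int.cast ∘ x)‖ ^ (-s) ≤ (‖x‖ / K) ^ (-s) :=
        Real.rpow_le_rpow_of_nonpos (by positivity) (by rwa [div_le_iff₀' hK]) (by linarith)
    _ = (K : ℝ) ^ s * ‖x‖ ^ (-s) := by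
        rw [Real.div_rpow hx.le hK.le, Real.rpow_neg hK.le, div_eq_mul_inv, inv_inv, mul_comm]

theorem IsLattice2.summable_norm_rpow_neg {L : Set ℝ²} (hL : IsLattice2 L) {s : ℝ}
    (hs : 2 < s) : Summable fun p : ↥(L \ {0}) => ‖(p : ℝ²)‖ ^ (-s) := by
  obtain ⟨u, v, hdet, rfl⟩ := hL
  set f := Fintype.linearCombination ℝ ![u, v]
  have hf : Function.Injective f := linearIndependent_iff_injective_fintypeLinearCombination.mp
    (linearIndependent_of_det2_ne_zero hdet)
  have hcoeff (p : ↥(latticeSet u v \ {0})) : ∃ x : Fin 2 → ℤ, f (Int.cast ∘ x) = p := by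
    obtain ⟨m, n, hp⟩ := p.2.1
    exact ⟨![m, n], by simp [f, hp, Fintype.linearCombination_apply, Fin.sum_univ_two]⟩
  choose coeff hcoeff using hcoeff
  refine ((summable_norm_comp_intCast_rpow_neg hf hs).comp_injective (i := coeff)
    fun p q hpq => Subtype.ext ?_).congr fun p => ?_
  · rw [← hcoeff p, ← hcoeff q, hpq]
  · rw [← hcoeff p]; rfl

theorem IsLattice2OfCovol.isLattice2 {L : Set ℝ²} {V : ℝ} (hL : IsLattice2OfCovol L V) :
    IsLattice2 L :=
  let ⟨u, v, hdet, _, hL⟩ := hL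
  ⟨u, v, hdet, hL⟩

theorem IsLattice2.epsteinZeta_pos {L : Set ℝ²} (hL : IsLattice2 L) {s : ℝ} (hs : 2 < s) :
    0 < epsteinZeta L s := by
  obtain ⟨u, v, hdet, rfl⟩ := id hL
  have hu : u ≠ 0 := by simpa using (linearIndependent_of_det2_ne_zero hdet).ne_zero 0
  exact (hL.summable_norm_rpow_neg hs).tsum_pos (fun _ => by positivity)
    ⟨u, ⟨1, 0, by simp⟩, hu⟩ (Real.rpow_pos_of_pos (norm_pos_iff.mpr hu) _)

theorem tsum_smul_set_sdiff_zero {E M : Type*} [AddCommGroup E] [Module ℝ E] [AddCommMonoid M]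
    [TopologicalSpace M] (L : Set E) {c : ℝ} (hc : c ≠ 0) (F : E → M) :
    ∑' p : ↥(c • L \ {0}), F p = ∑' p : ↥(L \ {0}), F (c • p) := by
  have hset : c • L \ {0} = (c • ·) '' (L \ {0}) := by
    rw [Set.image_smul, Set.smul_set_sdiff₀ hc, Set.smul_set_singleton, smul_zero]
  rw [hset, tsum_image F (smul_right_injective E hc).injOn]

theorem IsLattice2.LJenergy_smul {L : Set ℝ²} (hL : IsLattice2 L) (a b : ℝ) {α β : ℝ}
    (hα : 2 < α) (hβ : 2 < β) {c : ℝ} (hc : 0 < c) :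
    LJenergy a b α β (c • L) =
      a * epsteinZeta L α * c⁻¹ ^ α - b * epsteinZeta L β * c⁻¹ ^ β := by
  have hscale (p : ℝ²) (s : ℝ) : ‖c • p‖ ^ (-s) = c⁻¹ ^ s * ‖p‖ ^ (-s) := by
    rw [norm_smul, Real.norm_of_nonneg hc.le, Real.mul_rpow hc.le (norm_nonneg _),
      Real.rpow_neg hc.le, Real.inv_rpow hc.le]
  unfold LJenergy epsteinZeta
  rw [tsum_smul_set_sdiff_zero L hc.ne' fun p => a * ‖p‖ ^ (-α) - b * ‖p‖ ^ (-β)]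
  simp_rw [hscale]
  rw [Summable.tsum_sub (((hL.summable_norm_rpow_neg hα).mul_left _).mul_left a)
    (((hL.summable_norm_rpow_neg hβ).mul_left _).mul_left b), tsum_mul_left, tsum_mul_left,
    tsum_mul_left, tsum_mul_left]
  ring

theorem Real.rpow_le_div_mul_rpow_add_one_sub_div {r p q : ℝ} (hr : 0 ≤ r) (hp : 0 ≤ p)
    (hpq : p ≤ q) : r ^ p ≤ p / q * r ^ q + (1 - p / q) := by
  rcases hp.eq_or_lt with rfl | hp
  · simp
  have hq := hp.trans_le hpq
  have amgm := Real.geom_mean_le_arith_mean2_weighted (w₁ := p / q) (p₁ := r ^ q) (p₂ := 1)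
    (by positivity) (sub_nonneg.mpr <| (div_le_one hq).mpr hpq) (by positivity) zero_le_one
    (by ring)
  rwa [← Real.rpow_mul hr, mul_div_cancel₀ p hq.ne', Real.one_rpow, mul_one, mul_one] at amgm

section LennardJonesProfile

variable {A B α β t₀ : ℝ}

theorem mul_rpow_eq_of_rpow_sub_eq (ht₀ : 0 < t₀)
    (h : t₀ ^ (α - β) = B / A * (β / α)) (hA : 0 < A) :
    A * t₀ ^ α = B * (β / α) * t₀ ^ β := by
  have hsplit : t₀ ^ α = t₀ ^ (α - β) * t₀ ^ β := by rw [← Real.rpow_add ht₀, sub_add_cancel]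
  rw [hsplit, h]
  field_simp

theorem rpow_sub_rpow_eq_of_rpow_sub_eq (ht₀ : 0 < t₀)
    (h : t₀ ^ (α - β) = B / A * (β / α)) (hA : 0 < A) :
    A * t₀ ^ α - B * t₀ ^ β = B * t₀ ^ β * (β / α - 1) := by
  rw [mul_rpow_eq_of_rpow_sub_eq ht₀ h hA]
  ring

theorem isMinOn_rpow_sub_rpow (hA : 0 < A) (hB : 0 < B) (hβ : 0 < β) (hαβ : β < α)
    (ht₀ : 0 < t₀) (h : t₀ ^ (α - β) = B / A * (β / α)) :
    IsMinOn (fun t => A * t ^ α - B * t ^ β) (Set.Ioi 0) t₀ := by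
  intro t (ht : 0 < t)
  set r := t / t₀
  have hr : 0 ≤ r := by positivity
  have ht : t = r * t₀ := (div_mul_cancel₀ t ht₀.ne').symm
  have amgm := Real.rpow_le_div_mul_rpow_add_one_sub_div hr hβ.le hαβ.le
  show A * t₀ ^ α - B * t₀ ^ β ≤ A * t ^ α - B * t ^ β
  rw [rpow_sub_rpow_eq_of_rpow_sub_eq ht₀ h hA, ht, Real.mul_rpow hr ht₀.le,
    Real.mul_rpow hr ht₀.le, mul_left_comm, mul_rpow_eq_of_rpow_sub_eq ht₀ h hA]
  have : 0 < B * t₀ ^ β := by positivity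
  nlinarith

end LennardJonesProfile

theorem mul_div_mul_rpow_eq {A B x e : ℝ} (hA : 0 < A) (hB : 0 < B) (hx : 0 ≤ x) :
    B * (B / A * x) ^ e = B ^ (e + 1) / A ^ e * x ^ e := by
  rw [Real.mul_rpow (by positivity) hx, Real.div_rpow hB.le hA.le, Real.rpow_add_one hB.ne']
  ring

theorem Real.inv_sqrt_rpow_two_div_rpow {K γ : ℝ} (hK : 0 < K) (hγ : γ ≠ 0) :
    (√(K ^ (2 / γ)))⁻¹ ^ γ = K⁻¹ := by
  rw [Real.sqrt_eq_rpow, ← Real.rpow_mul hK.le, Real.inv_rpow (by positivity),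
    ← Real.rpow_mul hK.le, show 2 / γ * (1 / 2) * γ = 1 by field_simp, Real.rpow_one]

/-- The minimal Lennard-Jones type energy among the dilates of a unit co-volume lattice `L`
is attained at `V_L` and equals
`(b^{α/(α-β)}ζ_L(β)^{α/(α-β)}/(a^{β/(α-β)}ζ_L(α)^{β/(α-β)}))·(β/α)^{β/(α-β)}·(β/α - 1) < 0`. -/
theorem minimal_energy_among_dilations
    (α β a b : ℝ) (hβ : 2 < β) (hαβ : β < α) (ha : 0 < a) (hb : 0 < b)
    (L : Set (EuclideanSpace ℝ (Fin 2))) (hL : IsLattice2OfCovol L 1) (VL : ℝ)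
    (hVL : VL = (a * α * epsteinZeta L α / (b * β * epsteinZeta L β)) ^ (2 / (α - β))) :
    (∀ V : ℝ, 0 < V →
      LJenergy a b α β (Real.sqrt VL • L) ≤ LJenergy a b α β (Real.sqrt V • L)) ∧
    LJenergy a b α β (Real.sqrt VL • L) =
      b ^ (α / (α - β)) * epsteinZeta L β ^ (α / (α - β)) /
        (a ^ (β / (α - β)) * epsteinZeta L α ^ (β / (α - β))) *
        (β / α) ^ (β / (α - β)) * (β / α - 1) ∧
    LJenergy a b α β (Real.sqrt VL • L) < 0 := by
  replace hL := hL.isLattice2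
  have hα : 2 < α := hβ.trans hαβ
  have hζα := hL.epsteinZeta_pos hα
  have hζβ := hL.epsteinZeta_pos hβ
  set A := a * epsteinZeta L α
  set B := b * epsteinZeta L β
  have hE (c : ℝ) (hc : 0 < c) : LJenergy a b α β (c • L) = A * c⁻¹ ^ α - B * c⁻¹ ^ β :=
    hL.LJenergy_smul a b hα hβ hc
  have hVLpos : 0 < VL := hVL ▸ by positivity
  have ht₀ : (√VL)⁻¹ ^ (α - β) = B / A * (β / α) := by
    rw [hVL, Real.inv_sqrt_rpow_two_div_rpow (by positivity) (sub_pos.mpr hαβ).ne']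
    simp only [A, B]
    field_simp
  have hmin := rpow_sub_rpow_eq_of_rpow_sub_eq (by positivity) ht₀ (by positivity)
  rw [hE _ (by positivity), hmin]
  refine ⟨fun V hV => ?_, ?_, ?_⟩
  · rw [← hmin, hE _ (by positivity)]
    exact isMinOn_rpow_sub_rpow (by positivity) (by positivity) (by linarith) hαβ (by positivity)
      ht₀ (inv_pos.mpr (Real.sqrt_pos.mpr hV))
  · have he : β / (α - β) + 1 = α / (α - β) := by field_simp [(sub_pos.mpr hαβ).ne']; ring
    have ht₀β : (√VL)⁻¹ ^ β = (B / A * (β / α)) ^ (β / (α - β)) := by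
      rw [← ht₀, ← Real.rpow_mul (by positivity)]
      field_simp [(sub_pos.mpr hαβ).ne']
    rw [ht₀β, mul_div_mul_rpow_eq (by positivity) (by positivity) (by positivity), he,
      Real.mul_rpow hb.le hζβ.le, Real.mul_rpow ha.le hζα.le]
  · have : β / α < 1 := (div_lt_one (by linarith)).mpr hαβ
    have : 0 < B * (√VL)⁻¹ ^ β := by positivity
    nlinarith
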